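/- Let T be a decorated tree with fl(T) = k free leaves. For any integer i with 1 ≤ i ≤ k, the tree Δ_T(T,i) — obtained by attaching T under a new root vertex and adding 1 to every leaf label except for the last i free leaves (in traversal order) — is again a decorated tree; moreover Π_T(Δ_T(T,i)) = T and fl(Δ_T(T,i)) = i. -/

import Mathlib

/-- Rooted plane trees with integer labels on the leaves. -/
inductive DTree where
  | leaf : ℤ → DTree
  | node : List DTree → DTree

mutual
/-- The list of leaf labels of a tree, in left-to-right (prefix traversal) order. -/
def leafLabels : DTree → List ℤ
  | .leaf l => [l]
  | .node ts => leafLabelsList ts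
def leafLabelsList : List DTree → List ℤ
  | [] => []
  | t :: ts => leafLabels t ++ leafLabelsList ts
end

/-- The three conditions of decorated trees, for a subtree whose root is at depth `d`:
leaf labels are at least -1 and strictly less than the depth of their parent;
every internal node of positive depth `d` has a descendant leaf labeled at most `d - 2`;
and in any direct subtree of an internal node of depth `d`, a leaf labeled `d` is
preceded in traversal order only by leaves labeled at least `d`. -/
inductive DecoAt : DTree → ℕ → Prop where
  | leaf {l : ℤ} {d : ℕ} (h1 : -1 ≤ l) (h2 : l < (d : ℤ) - 1) : DecoAt (.leaf l) d
  | node {ts : List DTree} {d : ℕ} (hne : ts ≠ [])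
      (h2 : 0 < d → ∃ x ∈ leafLabelsList ts, x ≤ (d : ℤ) - 2)
      (h3 : ∀ t' ∈ ts, ∀ a b, leafLabels t' = a ++ (d : ℤ) :: b → ∀ x ∈ a, (d : ℤ) ≤ x)
      (h4 : ∀ t' ∈ ts, DecoAt t' (d + 1)) : DecoAt (.node ts) d

/-- A decorated tree: the root is at depth 0. -/
def IsDeco (T : DTree) : Prop := DecoAt T 0

/-- The number of free leaves (leaves labeled -1). -/
def fl (T : DTree) : ℕ := (leafLabels T).count (-1)

mutual
/-- Increment leaf labels, where the counter `m` is the number of free leaves (from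
the left) that still must be incremented; once it reaches 0, remaining free leaves
are left untouched. Returns the new tree and the remaining counter. -/
def incUpTo : DTree → ℕ → DTree × ℕ
  | .leaf l, m =>
      if l = -1 then (if 0 < m then (.leaf 0, m - 1) else (.leaf (-1), m))
      else (.leaf (l + 1), m)
  | .node ts, m =>
      let p := incList ts m
      (.node p.1, p.2)
def incList : List DTree → ℕ → List DTree × ℕ
  | [], m => ([], m)
  | t :: ts, m =>
      let p := incUpTo t m
      let q := incList ts p.2
      (p.1 :: q.1, q.2)
end

/-- Δ_T(T,i): attach `T` under a new root vertex and add 1 to every leaf label,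
except for the last `i` free leaves (in traversal order). -/
def deltaT (T : DTree) (i : ℕ) : DTree := .node [(incUpTo T (fl T - i)).1]

mutual
/-- Subtract 1 from every non-free leaf label. -/
def decLeaves : DTree → DTree
  | .leaf l => if l = -1 then .leaf (-1) else .leaf (l - 1)
  | .node ts => .node (decList ts)
def decList : List DTree → List DTree
  | [] => []
  | t :: ts => decLeaves t :: decList ts
end

/-- Π_T: remove the root (which has a unique child) and subtract 1 from every
non-free leaf label. -/
def piT : DTree → DTree
  | .node [t] => decLeaves t
  | t => t

/-!
On leaf labels, `Δ_T` is a left-to-right scan: every non-free label goes up by one, and of the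
free leaves the first `fl T - i` become `0` while the last `i` stay `-1`. Each decoration
condition of `T` at depth `d` therefore becomes the same condition of the shifted tree at
depth `d + 1`. At the two new levels: a leaf labelled `0` below the new root is preceded only
by non-free leaves, because the free leaves turned into `0` come before those kept at `-1`;
and the old root, now at depth `1`, has a leaf labelled `-1` since `i ≥ 1`.
-/

namespace List.Forall₂

variable {α β : Type*} {R : α → β → Prop} {u : List α} {v : List β}

theorem exists_rel_of_mem_left (h : Forall₂ R u v) {x : α} (hx : x ∈ u) : ∃ y ∈ v, R x y := by
  induction h with
  | nil => simp at hx
  | cons hr _ ih =>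
    rcases List.mem_cons.1 hx with rfl | hx
    · exact ⟨_, List.mem_cons_self, hr⟩
    · obtain ⟨y, hy, hxy⟩ := ih hx
      exact ⟨y, List.mem_cons_of_mem _ hy, hxy⟩

theorem exists_rel_of_mem_right (h : Forall₂ R u v) {y : β} (hy : y ∈ v) : ∃ x ∈ u, R x y := by
  obtain ⟨x, hx, hxy⟩ := h.flip.exists_rel_of_mem_left hy
  exact ⟨x, hx, hxy⟩

theorem exists_eq_append_cons_of_right {a b : List β} {y : β} (h : Forall₂ R u (a ++ y :: b)) :
    ∃ a₀ x b₀, u = a₀ ++ x :: b₀ ∧ Forall₂ R a₀ a ∧ R x y := by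
  obtain ⟨x, b₀, hxy, -, hdrop⟩ :=
    List.forall₂_cons_right_iff.1 (List.forall₂_drop_append u a (y :: b) h)
  exact ⟨_, x, b₀, by rw [← hdrop, List.take_append_drop], List.forall₂_take_append u a _ h, hxy⟩

end List.Forall₂

def incLabel (l : ℤ) (m : ℕ) : ℤ × ℕ :=
  if l = -1 then (if 0 < m then (0, m - 1) else (-1, m)) else (l + 1, m)

def incLabels : List ℤ → ℕ → List ℤ × ℕ
  | [], m => ([], m)
  | x :: xs, m =>
      let p := incLabel x m
      let q := incLabels xs p.2
      (p.1 :: q.1, q.2)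

def IncRel (x y : ℤ) : Prop := (x = -1 ∧ (y = 0 ∨ y = -1)) ∨ (x ≠ -1 ∧ y = x + 1)

/-- Condition (3) of `DecoAt` for one direct subtree, `c` being the depth of its parent. -/
def GeBefore (c : ℤ) (l : List ℤ) : Prop := ∀ a b, l = a ++ c :: b → ∀ x ∈ a, c ≤ x

section Labels

theorem incRel_incLabel (x : ℤ) (m : ℕ) : IncRel x (incLabel x m).1 := by
  unfold incLabel IncRel
  split_ifs <;> simp_all

theorem incLabels_append (u v : List ℤ) (m : ℕ) :
    incLabels (u ++ v) m =
      ((incLabels u m).1 ++ (incLabels v (incLabels u m).2).1,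
        (incLabels v (incLabels u m).2).2) := by
  induction u generalizing m with
  | nil => rfl
  | cons x u ih => simp only [List.cons_append, incLabels, ih]

theorem forall₂_incLabels (ls : List ℤ) (m : ℕ) : List.Forall₂ IncRel ls (incLabels ls m).1 := by
  induction ls generalizing m with
  | nil => exact .nil
  | cons x ls ih => exact .cons (incRel_incLabel x m) (ih _)

variable {ls : List ℤ}

theorem count_neg_one_incLabels (hls : ∀ x ∈ ls, -1 ≤ x) (m : ℕ) :
    (incLabels ls m).1.count (-1) = ls.count (-1) - m := by
  induction ls generalizing m with
  | nil => simp [incLabels]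
  | cons x ls ih =>
    have ih' := ih (fun z hz => hls z (List.mem_cons_of_mem _ hz))
    have hx := hls x List.mem_cons_self
    simp only [incLabels, incLabel]
    split_ifs <;> simp_all [List.count_cons] <;> omega

theorem neg_one_le_of_mem_incLabels (hls : ∀ x ∈ ls, -1 ≤ x) {m : ℕ} {y : ℤ}
    (hy : y ∈ (incLabels ls m).1) : -1 ≤ y := by
  obtain ⟨x, hx, hxy⟩ := (forall₂_incLabels ls m).exists_rel_of_mem_right hy
  have := hls x hx
  rcases hxy with ⟨_, rfl | rfl⟩ | ⟨_, rfl⟩ <;> omega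

theorem exists_le_of_incLabels {x c : ℤ} (hx : x ∈ ls) (hxc : x ≤ c) (m : ℕ) :
    ∃ y ∈ (incLabels ls m).1, y ≤ c + 1 := by
  obtain ⟨y, hy, hxy⟩ := (forall₂_incLabels ls m).exists_rel_of_mem_left hx
  exact ⟨y, hy, by rcases hxy with ⟨_, rfl | rfl⟩ | ⟨_, rfl⟩ <;> omega⟩

theorem GeBefore.incLabels {c : ℤ} (hc : 0 ≤ c) (h : GeBefore c ls) (m : ℕ) :
    GeBefore (c + 1) (incLabels ls m).1 := by
  intro a b heq y hy
  have hrel := forall₂_incLabels ls m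
  rw [heq] at hrel
  obtain ⟨a₀, x₀, b₀, rfl, ha, hx₀⟩ := hrel.exists_eq_append_cons_of_right
  have hx₀c : x₀ = c := by rcases hx₀ with ⟨_, h | h⟩ | ⟨_, h⟩ <;> omega
  obtain ⟨x, hx, hxy⟩ := ha.exists_rel_of_mem_right hy
  have := h a₀ b₀ (by rw [hx₀c]) x hx
  rcases hxy with ⟨_, _⟩ | ⟨_, rfl⟩ <;> omega

theorem zero_not_mem_incLabels_zero (ls : List ℤ) : (0 : ℤ) ∉ (incLabels ls 0).1 := by
  induction ls with
  | nil => simp [incLabels]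
  | cons x ls ih =>
    simp only [incLabels, incLabel, lt_irrefl, if_false]
    split_ifs
    · simp_all
    · simp only [List.mem_cons, not_or]
      exact ⟨by omega, ih⟩

/-- The free leaves turned into `0` are the first ones. -/
theorem neg_one_not_mem_of_incLabels_eq (hls : ∀ x ∈ ls, -1 ≤ x) {m : ℕ} {a b : List ℤ}
    (heq : (incLabels ls m).1 = a ++ 0 :: b) : (-1 : ℤ) ∉ a := by
  induction ls generalizing m a with
  | nil => cases a <;> simp [incLabels] at heq
  | cons x ls ih =>
    obtain _ | ⟨z, a⟩ := a
    · simp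
    simp only [incLabels, List.cons_append, List.cons.injEq] at heq
    obtain ⟨hz, heq⟩ := heq
    rw [List.mem_cons, not_or]
    refine ⟨fun hz1 => ?_, ih (fun y hy => hls y (List.mem_cons_of_mem _ hy)) heq⟩
    have hx := hls x List.mem_cons_self
    have hm : x = -1 ∧ m = 0 := by
      unfold incLabel at hz; split_ifs at hz <;> simp_all <;> omega
    obtain ⟨rfl, rfl⟩ := hm
    exact zero_not_mem_incLabels_zero ls (by simp [incLabel] at heq; simp [heq])

theorem geBefore_zero_incLabels (hls : ∀ x ∈ ls, -1 ≤ x) (m : ℕ) :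
    GeBefore 0 (incLabels ls m).1 := by
  intro a b heq y hy
  have hy1 : -1 ≤ y := neg_one_le_of_mem_incLabels hls (by rw [heq]; simp [hy])
  have : y ≠ -1 := fun h => neg_one_not_mem_of_incLabels_eq hls heq (h ▸ hy)
  omega

end Labels

theorem leafLabelsList_eq_flatMap (ts : List DTree) :
    leafLabelsList ts = ts.flatMap leafLabels := by
  induction ts with
  | nil => rfl
  | cons t ts ih => simp [leafLabelsList, ih]

mutual
theorem leafLabels_incUpTo : ∀ (T : DTree) (m : ℕ),
    (leafLabels (incUpTo T m).1, (incUpTo T m).2) = incLabels (leafLabels T) m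
  | .leaf l, m => by
    simp only [incUpTo, leafLabels, incLabels, incLabel]
    split_ifs <;> rfl
  | .node ts, m => leafLabelsList_incList ts m
theorem leafLabelsList_incList : ∀ (ts : List DTree) (m : ℕ),
    (leafLabelsList (incList ts m).1, (incList ts m).2) = incLabels (leafLabelsList ts) m
  | [], m => rfl
  | t :: ts, m => by
    simp only [incList, leafLabelsList, incLabels_append, ← leafLabels_incUpTo t m,
      ← leafLabelsList_incList ts]
end

theorem leafLabels_incUpTo_fst (T : DTree) (m : ℕ) :
    leafLabels (incUpTo T m).1 = (incLabels (leafLabels T) m).1 :=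
  congrArg Prod.fst (leafLabels_incUpTo T m)

theorem DecoAt.neg_one_le {T : DTree} {d : ℕ} (h : DecoAt T d) :
    ∀ x ∈ leafLabels T, -1 ≤ x := by
  induction h with
  | leaf h1 => simpa [leafLabels] using h1
  | node _ _ _ _ ih =>
    simp only [leafLabels, leafLabelsList_eq_flatMap, List.mem_flatMap]
    rintro x ⟨t, ht, hx⟩
    exact ih t ht x hx

mutual
theorem decLeaves_incUpTo : ∀ (T : DTree) (m : ℕ), (∀ x ∈ leafLabels T, -1 ≤ x) →
    decLeaves (incUpTo T m).1 = T
  | .leaf l, m, h => by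
    have hl : -1 ≤ l := by simpa [leafLabels] using h
    have hl' : l + 1 ≠ -1 := by omega
    simp only [incUpTo]
    split_ifs <;> simp [decLeaves, *]
  | .node ts, m, h => by
    simp only [incUpTo, decLeaves, DTree.node.injEq]
    exact decList_incList ts m h
theorem decList_incList : ∀ (ts : List DTree) (m : ℕ), (∀ x ∈ leafLabelsList ts, -1 ≤ x) →
    decList (incList ts m).1 = ts
  | [], m, h => rfl
  | t :: ts, m, h => by
    simp only [leafLabelsList, List.mem_append] at h
    simp only [incList, decList, List.cons.injEq]
    exact ⟨decLeaves_incUpTo t m (fun x hx => h x (.inl hx)),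
      decList_incList ts _ (fun x hx => h x (.inr hx))⟩
end

theorem exists_of_mem_incList {ts : List DTree} {m : ℕ} {t' : DTree}
    (h : t' ∈ (incList ts m).1) : ∃ t ∈ ts, ∃ m', t' = (incUpTo t m').1 := by
  induction ts generalizing m with
  | nil => simp [incList] at h
  | cons t ts ih =>
    simp only [incList, List.mem_cons] at h
    rcases h with rfl | h
    · exact ⟨t, List.mem_cons_self, m, rfl⟩
    · obtain ⟨u, hu, m', rfl⟩ := ih h
      exact ⟨u, List.mem_cons_of_mem _ hu, m', rfl⟩

/-- Condition (2) is the only one that does not transfer by itself from depth `d` to `d + 1`. -/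
theorem decoAt_incUpTo_node {ts : List DTree} {d m : ℕ} (hne : ts ≠ [])
    (h3 : ∀ t ∈ ts, GeBefore d (leafLabels t))
    (h4 : ∀ t ∈ ts, ∀ m, DecoAt (incUpTo t m).1 (d + 2))
    (h2 : ∃ x ∈ leafLabels (incUpTo (.node ts) m).1, x ≤ (d : ℤ) - 1) :
    DecoAt (incUpTo (.node ts) m).1 (d + 1) := by
  obtain ⟨x, hx, hxd⟩ := h2
  refine DecoAt.node ?_ (fun _ => ⟨x, hx, by push_cast; omega⟩) ?_ ?_
  · obtain ⟨t, ts, rfl⟩ := List.exists_cons_of_ne_nil hne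
    simp [incList]
  · intro t' ht'
    obtain ⟨t, ht, m', rfl⟩ := exists_of_mem_incList ht'
    rw [leafLabels_incUpTo_fst, Nat.cast_succ]
    exact (h3 t ht).incLabels (Int.natCast_nonneg d) m'
  · intro t' ht'
    obtain ⟨t, ht, m', rfl⟩ := exists_of_mem_incList ht'
    exact h4 t ht m'

theorem decoAt_incUpTo {T : DTree} {d : ℕ} (h : DecoAt T d) (hd : 1 ≤ d) (m : ℕ) :
    DecoAt (incUpTo T m).1 (d + 1) := by
  induction h generalizing m with
  | leaf h1 h2 =>
    simp only [incUpTo]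
    split_ifs <;> exact .leaf (by omega) (by push_cast; omega)
  | @node ts d hne h2 h3 h4 ih =>
    obtain ⟨x, hx, hxd⟩ := h2 hd
    obtain ⟨y, hy, hyd⟩ := exists_le_of_incLabels hx hxd m
    refine decoAt_incUpTo_node hne h3 (fun t ht => ih t ht (by omega)) ⟨y, ?_, by omega⟩
    rw [leafLabels_incUpTo_fst]
    exact hy

section Delta

variable {T : DTree} {i : ℕ}

theorem leafLabels_deltaT (T : DTree) (i : ℕ) :
    leafLabels (deltaT T i) = (incLabels (leafLabels T) (fl T - i)).1 := by
  simp [deltaT, leafLabels, leafLabelsList, leafLabels_incUpTo_fst]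

theorem fl_deltaT (hT : ∀ x ∈ leafLabels T, -1 ≤ x) (hi : i ≤ fl T) : fl (deltaT T i) = i := by
  rw [fl, leafLabels_deltaT, count_neg_one_incLabels hT, ← fl]
  omega

theorem piT_deltaT (hT : ∀ x ∈ leafLabels T, -1 ≤ x) : piT (deltaT T i) = T :=
  decLeaves_incUpTo T _ hT

theorem isDeco_deltaT (hT : IsDeco T) (h1 : 1 ≤ i) (h2 : i ≤ fl T) : IsDeco (deltaT T i) := by
  have hge := hT.neg_one_le
  rcases hT with ⟨hl₁, hl₂⟩ | ⟨hne, -, h3, h4⟩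
  · omega
  have hfree : (-1 : ℤ) ∈ leafLabels (deltaT _ i) :=
    List.count_pos_iff.1 (by rw [← fl, fl_deltaT hge h2]; omega)
  refine DecoAt.node (by simp) (by simp) ?_ ?_
  · intro t ht
    rw [List.mem_singleton.1 ht, leafLabels_incUpTo_fst]
    exact geBefore_zero_incLabels hge _
  · intro t ht
    rw [List.mem_singleton.1 ht]
    refine decoAt_incUpTo_node hne h3 (fun t ht => decoAt_incUpTo (h4 t ht) le_rfl)
      ⟨-1, ?_, by simp⟩
    simpa [deltaT, leafLabels, leafLabelsList] using hfree

end Delta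

theorem stmt3 (T : DTree) (i : ℕ) (hT : IsDeco T) (h1 : 1 ≤ i) (h2 : i ≤ fl T) :
    IsDeco (deltaT T i) ∧ piT (deltaT T i) = T ∧ fl (deltaT T i) = i :=
  ⟨isDeco_deltaT hT h1 h2, piT_deltaT hT.neg_one_le, fl_deltaT hT.neg_one_le h2⟩
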